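/- Let $F$ be a field and let $\ell$ be a prime number. Let $t \in F((s))$ be a nonzero Laurent series whose $s$-adic valuation $\operatorname{ord}_s(t) = d$ is coprime to $\ell$. If $x_0, x_1, x_2, x_3 \in F((s))$ satisfy $x_0^{\ell^2} + t\,x_1^{\ell^2} + t^2 x_2^{\ell^2} + t^3 x_3^{\ell^2} = 0$, then $x_0 = x_1 = x_2 = x_3 = 0$. (Consequently, the projective hypersurface $\{x_0^{\ell^2} + t x_1^{\ell^2} + t^2 x_2^{\ell^2} + t^3 x_3^{\ell^2} = 0\} \subset \mathbb{P}^3$ over $F((t))$ has no rational point over any Laurent series extension $F((s))$ in which $t$ has valuation coprime to $\ell$.) -/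

import Mathlib

/-!
Give `F((s))` its valuation `v = ordₛ`, with `v t = d`. For `i < m` and `xᵢ ≠ 0`,
`v (tⁱ xᵢᵐ) = i d + m v(xᵢ) ≡ i d (mod m)`, and since `d` is a unit mod `m` these residues are
pairwise distinct. So the nonzero terms of `∑ tⁱ xᵢᵐ` have pairwise distinct valuations, and a
sum of such terms cannot vanish unless every term does: the term of least valuation would
dominate. Take `m = ℓ² ≥ 4`, with `d` coprime to `ℓ²`.
-/

theorem eq_of_mul_add_mul_eq_of_isCoprime {m : ℕ} {d : ℤ} (hcop : IsCoprime d m) {i j : ℕ}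
    (hi : i < m) (hj : j < m) {a b : ℤ} (h : i * d + m * a = j * d + m * b) : i = j := by
  have hdvd : (m : ℤ) ∣ (j - i) * d := ⟨a - b, by linear_combination -h⟩
  have hmod : (i : ℤ) ≡ j [ZMOD m] :=
    Int.modEq_iff_dvd.mpr (hcop.symm.dvd_of_dvd_mul_right hdvd)
  exact (Int.natCast_modEq_iff.mp hmod).eq_of_lt_of_lt hi hj

namespace AddValuation

variable {K : Type*} [DivisionRing K]

section

variable {Γ₀ : Type*} [LinearOrderedAddCommMonoidWithTop Γ₀] [Nontrivial Γ₀]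

theorem forall_eq_zero_of_sum_eq_zero (v : AddValuation K Γ₀) {ι : Type*} {s : Finset ι}
    {f : ι → K} (hv : ∀ i ∈ s, ∀ j ∈ s, f i ≠ 0 → v (f i) = v (f j) → i = j)
    (hsum : ∑ i ∈ s, f i = 0) : ∀ i ∈ s, f i = 0 := by
  classical
  by_contra! ⟨i, hi, hfi⟩
  obtain ⟨j, hj, hmin⟩ := s.exists_min_image (v ∘ f) ⟨i, hi⟩
  have hfj : f j ≠ 0 :=
    v.ne_top_iff.mp (ne_top_of_le_ne_top (v.ne_top_iff.mpr hfi) (hmin i hi))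
  have hlt : ∀ k ∈ s.erase j, v (f j) < v (f k) := fun k hk =>
    (hmin k (Finset.mem_of_mem_erase hk)).lt_of_ne
      fun h => Finset.ne_of_mem_erase hk (hv j hj k (Finset.mem_of_mem_erase hk) hfj h).symm
  have hval : v (∑ i ∈ s, f i) = v (f j) := by
    rw [← Finset.add_sum_erase s f hj]
    exact v.map_add_eq_of_lt_left (v.map_lt_sum (v.ne_top_iff.mpr hfj) hlt)
  rw [hsum, v.map_zero] at hval
  exact v.ne_top_iff.mpr hfj hval.symm

end

variable (v : AddValuation K (WithTop ℤ))

theorem map_pow_mul_pow {t x : K} {d a : ℤ} (ht : v t = d) (hx : v x = a) (i m : ℕ) :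
    v (t ^ i * x ^ m) = ((i * d + m * a : ℤ) : WithTop ℤ) := by
  simp only [v.map_mul, v.map_pow, ht, hx, ← WithTop.coe_nsmul, ← WithTop.coe_add, nsmul_eq_mul]

theorem eq_of_map_pow_mul_pow_eq {t : K} {d : ℤ} (ht : v t = d) {m : ℕ} (hcop : IsCoprime d m)
    {i j : ℕ} (hi : i < m) (hj : j < m) {x y : K} (hx : t ^ i * x ^ m ≠ 0)
    (h : v (t ^ i * x ^ m) = v (t ^ j * y ^ m)) : i = j := by
  have hm0 : m ≠ 0 := (i.zero_le.trans_lt hi).ne'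
  have hy : t ^ j * y ^ m ≠ 0 := v.ne_top_iff.mp (h ▸ v.ne_top_iff.mpr hx)
  obtain ⟨a, ha⟩ := WithTop.ne_top_iff_exists.mp
    (v.ne_top_iff.mpr (pow_ne_zero_iff hm0 |>.mp (right_ne_zero_of_mul hx)))
  obtain ⟨b, hb⟩ := WithTop.ne_top_iff_exists.mp
    (v.ne_top_iff.mpr (pow_ne_zero_iff hm0 |>.mp (right_ne_zero_of_mul hy)))
  rw [v.map_pow_mul_pow ht ha.symm, v.map_pow_mul_pow ht hb.symm, WithTop.coe_inj] at h
  exact eq_of_mul_add_mul_eq_of_isCoprime hcop hi hj h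

theorem eq_zero_of_sum_pow_mul_pow_eq_zero {t : K} {d : ℤ} (ht : v t = d) {m n : ℕ}
    (hcop : IsCoprime d m) (hnm : n ≤ m) {x : Fin n → K}
    (hsum : ∑ i : Fin n, t ^ (i : ℕ) * x i ^ m = 0) (i : Fin n) : x i = 0 := by
  have ht0 : t ≠ 0 := v.ne_top_iff.mp (ht ▸ WithTop.coe_ne_top)
  have hm0 : m ≠ 0 := (i.pos.trans_le hnm).ne'
  have hterm : t ^ (i : ℕ) * x i ^ m = 0 :=
    v.forall_eq_zero_of_sum_eq_zero (s := Finset.univ)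
      (fun j _ k _ hj hjk => Fin.ext <|
        v.eq_of_map_pow_mul_pow_eq ht hcop (j.2.trans_le hnm) (k.2.trans_le hnm) hj hjk)
      hsum i (Finset.mem_univ i)
  exact pow_eq_zero_iff hm0 |>.mp ((mul_eq_zero.mp hterm).resolve_left (pow_ne_zero _ ht0))

end AddValuation

/-- Let `F` be a field and `ℓ` a prime. Let `t ∈ F((s))` be a nonzero Laurent series whose
`s`-adic valuation `ordₛ(t) = d` is coprime to `ℓ`. If `x₀, x₁, x₂, x₃ ∈ F((s))` satisfy
`x₀^{ℓ²} + t x₁^{ℓ²} + t² x₂^{ℓ²} + t³ x₃^{ℓ²} = 0`, then `x₀ = x₁ = x₂ = x₃ = 0`. -/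
theorem no_rational_point_of_coprime_valuation
    (F : Type*) [Field F] (ℓ : ℕ) (hℓ : ℓ.Prime)
    (t : LaurentSeries F) (ht : t ≠ 0) (d : ℤ) (hd : t.order = d)
    (hcop : IsCoprime d (ℓ : ℤ))
    (x0 x1 x2 x3 : LaurentSeries F)
    (heq : x0 ^ ℓ ^ 2 + t * x1 ^ ℓ ^ 2 + t ^ 2 * x2 ^ ℓ ^ 2 + t ^ 3 * x3 ^ ℓ ^ 2 = 0) :
    x0 = 0 ∧ x1 = 0 ∧ x2 = 0 ∧ x3 = 0 := by
  have hval : HahnSeries.addVal ℤ F t = d := by rw [HahnSeries.addVal_apply_of_ne ht, hd]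
  have hcop' : IsCoprime d ((ℓ ^ 2 : ℕ) : ℤ) := by push_cast; exact hcop.pow_right
  have hfour : 4 ≤ ℓ ^ 2 := by nlinarith [hℓ.two_le]
  have hsum : ∑ i : Fin 4, t ^ (i : ℕ) * ![x0, x1, x2, x3] i ^ ℓ ^ 2 = 0 := by
    simpa [Fin.sum_univ_four] using heq
  have hzero := AddValuation.eq_zero_of_sum_pow_mul_pow_eq_zero _ hval hcop' hfour hsum
  exact ⟨hzero 0, hzero 1, hzero 2, hzero 3⟩
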